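/- Assume min(p_0 + p_1, v) < 1, and let v, z, w ∈ (0,1], b ∈ ℕ₀ and x ∈ ℤ with x ≤ b. Then the joint transform of the ruin time, deficit at ruin and cumulative dividends of the walk reflected at b satisfies E_x[v^T · w^{−X̃_T} · z^{R(T)}; T < ∞] = Z_v(x,w) − ((Z_v(b+1,w) − z·Z_v(b,w))/(W_v(b+1) − z·W_v(b)))·W_v(x). -/

import Mathlib

/-!
Every transform in the statement is a sum over finite words of claims. For i.i.d. claims the
cylinder of a word `c` has probability `∏ p_{cᵢ}`, and `{τ < ∞}` for a first-passage time `τ` is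
the disjoint union of the cylinders of the (prefix-free) words at which the passage first happens.

Cutting a word at the first time the free walk exceeds `b` is the strong Markov property at the
level of words: the walk is upwards skip-free, so it is then exactly at `b + 1`, while the
reflected walk is at `b` and has paid one unit of dividends (a factor `z`). Writing `B(y)` for the
transform of `τ_{b+1}^+`, `A(y)` for that of ruin before `τ_{b+1}^+` and `G(y)` for the left-hand
side, this gives for `y ≤ b`
  `Ψ(y) = A(y) + B(y) Ψ(b+1)`, `W(y) = B(y) W(b+1)`, `G(y) = A(y) + z B(y) G(b)`,
hence `Z(y) = A(y) + B(y) Z(b+1)`. The hypothesis `min(p₀ + p₁, v) < 1` gives `z B(b) < 1`, so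
the last equation can be solved for `G(b)`, and eliminating `A` and `B` gives the formula.
-/

open MeasureTheory Set
open scoped ENNReal

noncomputable section

namespace RW

/-- Probability generating function of `p`. -/
def ptilde (p : ℕ → ℝ) (z : ℝ) : ℝ := ∑' k : ℕ, p k * z ^ k

variable {Ω : Type*} [MeasurableSpace Ω]

/-- The upwards skip-free random walk started at `x` (driven by the claims `C`). -/
def walk (C : ℕ → Ω → ℕ) (x : ℤ) (n : ℕ) (ω : Ω) : ℤ :=
  x + n - ∑ i ∈ Finset.range n, (C i ω : ℤ)

/-- First passage time (weakly) below `b`, `= ⊤` if it never happens. -/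
def tauMinus (C : ℕ → Ω → ℕ) (x b : ℤ) (ω : Ω) : ℕ∞ :=
  sInf ((fun n : ℕ => (n : ℕ∞)) '' {n : ℕ | walk C x n ω ≤ b})

/-- First passage time (weakly) above `b`, `= ⊤` if it never happens. -/
def tauPlus (C : ℕ → Ω → ℕ) (x b : ℤ) (ω : Ω) : ℕ∞ :=
  sInf ((fun n : ℕ => (n : ℕ∞)) '' {n : ℕ | b ≤ walk C x n ω})

/-- `E[f ; A]`, the expectation of `f` on the event `A`. -/
def Eind (P : Measure Ω) (A : Set Ω) (f : Ω → ℝ) : ℝ := ∫ ω, A.indicator f ω ∂P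

/-- The first scale function `W_v`. -/
def W (P : Measure Ω) (C : ℕ → Ω → ℕ) (v p0 : ℝ) (y : ℤ) : ℝ :=
  if 0 ≤ y then
    1 / (p0 * Eind P {ω | tauPlus C 0 y ω < tauMinus C 0 (-1) ω}
          fun ω => v ^ (tauPlus C 0 y ω).toNat)
  else 0

/-- The joint transform of the ruin time and the deficit at ruin. -/
def Psi (P : Measure Ω) (C : ℕ → Ω → ℕ) (v w : ℝ) (x : ℤ) : ℝ :=
  Eind P {ω | tauMinus C x (-1) ω < ⊤}
    fun ω => v ^ (tauMinus C x (-1) ω).toNat *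
      w ^ (-(walk C x (tauMinus C x (-1) ω).toNat ω))

/-- The second scale function `Z_v(·, w)` (normalized so that `Z_v(0,w) = 1`). -/
def Z (P : Measure Ω) (C : ℕ → Ω → ℕ) (v w p0 : ℝ) (x : ℤ) : ℝ :=
  Psi P C v w x + p0 * (1 - Psi P C v w 0) * W P C v p0 x

/-- Cumulative capital injections of the walk reflected at `0`. -/
def Rstar (C : ℕ → Ω → ℕ) (x : ℤ) (n : ℕ) (ω : Ω) : ℤ :=
  max 0 (-(Finset.range (n + 1)).inf' Finset.nonempty_range_add_one fun m => walk C x m ω)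

/-- First entrance time of the walk reflected at `0` into `[b, ∞)`. -/
def tauTildePlus (C : ℕ → Ω → ℕ) (x b : ℤ) (ω : Ω) : ℕ∞ :=
  sInf ((fun n : ℕ => (n : ℕ∞)) '' {n : ℕ | b ≤ walk C x n ω + Rstar C x n ω})

/-- Cumulative dividends under the barrier policy at `b`. -/
def Rdiv (C : ℕ → Ω → ℕ) (x b : ℤ) (n : ℕ) (ω : Ω) : ℤ :=
  max 0 ((Finset.range (n + 1)).sup' Finset.nonempty_range_add_one fun m => walk C x m ω - b)

/-- Single-period dividends under the barrier policy at `b`. -/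
def rdiv (C : ℕ → Ω → ℕ) (x b : ℤ) (n : ℕ) (ω : Ω) : ℤ :=
  Rdiv C x b n ω - if n = 0 then 0 else Rdiv C x b (n - 1) ω

/-- Ruin time of the walk reflected at the barrier `b`. -/
def Truin (C : ℕ → Ω → ℕ) (x b : ℤ) (ω : Ω) : ℕ∞ :=
  sInf ((fun n : ℕ => (n : ℕ∞)) '' {n : ℕ | walk C x n ω - Rdiv C x b n ω ≤ -1})

lemma walk_stronglyMeasurable (C : ℕ → Ω → ℕ) (hC : ∀ i, Measurable (C i)) (x : ℤ) (n : ℕ) :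
    StronglyMeasurable (walk C x n) := by
  have h : Measurable fun ω => ∑ i ∈ Finset.range n, (C i ω : ℤ) :=
    Finset.measurable_sum _ fun i _ => (measurable_from_top.comp (hC i))
  exact (measurable_const.sub h).stronglyMeasurable

end RW

namespace RW

section Prefixes

variable {α : Type*} {Q : List α → Prop} {a a' c d : List α}

def PrefixFree (D : Set (List α)) : Prop := ∀ a ∈ D, ∀ c ∈ D, a <+: c → a = c

def firstWords (Q : List α → Prop) : Set (List α) :=
  {c | Q c ∧ ∀ a, a <+: c → a.length < c.length → ¬ Q a}

lemma prefix_append_cases (h : a' <+: a ++ d) : a' <+: a ∨ ∃ d', d' <+: d ∧ a' = a ++ d' :=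
  (List.prefix_or_prefix_of_prefix h (List.prefix_append a d)).imp_right fun ha => by
    obtain ⟨d', rfl⟩ := List.prefix_iff_exists_eq_append.1 ha
    exact ⟨d', (List.prefix_append_right_inj a).1 h, rfl⟩

lemma forall_prefix_append {P : List α → Prop} :
    (∀ a', a' <+: a ++ d → P a') ↔ (∀ a', a' <+: a → P a') ∧ ∀ d', d' <+: d → P (a ++ d') := by
  refine ⟨fun h => ⟨fun a' ha' => h a' (ha'.trans (List.prefix_append a d)),
    fun d' hd' => h _ ((List.prefix_append_right_inj a).2 hd')⟩, fun h a' ha' => ?_⟩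
  rcases prefix_append_cases ha' with ha' | ⟨d', hd', rfl⟩
  exacts [h.1 a' ha', h.2 d' hd']

lemma PrefixFree.mono {D D' : Set (List α)} (h : PrefixFree D) (hD' : D' ⊆ D) : PrefixFree D' :=
  fun a ha c hc => h a (hD' ha) c (hD' hc)

lemma prefixFree_firstWords : PrefixFree (firstWords Q) := fun a ha _ hc hac =>
  hac.eq_of_length (hac.length_le.antisymm (not_lt.1 fun hlt => hc.2 a hac hlt ha.1))

lemma append_mem_firstWords_iff :
    a ++ d ∈ firstWords Q ↔
      (∀ a', a' <+: a → a'.length < a.length → ¬ Q a') ∧ d ∈ firstWords fun e => Q (a ++ e) := by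
  simp only [firstWords, Set.mem_ofPred_eq, List.length_append]
  constructor
  · rintro ⟨hQ, hmin⟩
    exact ⟨fun a' ha' hlt => hmin a' (ha'.trans (List.prefix_append a d)) (by omega), hQ,
      fun d' hd' hlt => hmin _ ((List.prefix_append_right_inj a).2 hd')
        (by simp only [List.length_append]; omega)⟩
  · rintro ⟨ha, hQ, hd⟩
    refine ⟨hQ, fun a' ha' hlt => ?_⟩
    rcases prefix_append_cases ha' with ha' | ⟨d', hd', rfl⟩
    · rcases ha'.length_le.lt_or_eq with h | h
      · exact ha a' ha' h
      · rw [ha'.eq_of_length h, ← List.append_nil a]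
        exact hd [] List.nil_prefix (by rw [List.length_nil]; omega)
    · exact hd d' hd' (by simp only [List.length_append] at hlt; omega)

lemma exists_append_mem_firstWords (h : ∃ a, a <+: c ∧ Q a) :
    ∃ a ∈ firstWords Q, ∃ d, a ++ d = c := by
  classical
  have hex : ∃ m, Q (c.take m) := by
    obtain ⟨a, ha, hQ⟩ := h
    exact ⟨a.length, List.prefix_iff_eq_take.1 ha ▸ hQ⟩
  refine ⟨c.take (Nat.find hex), ⟨Nat.find_spec hex, fun a ha hlt hQ => ?_⟩, _,
    List.take_append_drop _ _⟩
  rw [List.prefix_iff_eq_take.1 (ha.trans (List.take_prefix _ _))] at hQ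
  exact Nat.find_min hex (hlt.trans_le (List.length_take_le _ _)) hQ

lemma tsum_image2_append {U V : Set (List α)} (hU : PrefixFree U) {f g h : List α → ℝ≥0∞}
    (hh : ∀ a ∈ U, ∀ d ∈ V, h (a ++ d) = f a * g d) :
    ∑' c : Set.image2 (· ++ ·) U V, h c = (∑' a : U, f a) * ∑' d : V, g d := by
  have hinj : Set.InjOn (fun ad : List α × List α => ad.1 ++ ad.2) (U ×ˢ V) := by
    rintro ⟨a, d⟩ ⟨ha, hd⟩ ⟨a', d'⟩ ⟨ha', hd'⟩ (heq : a ++ d = a' ++ d')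
    obtain rfl : a = a' := (List.prefix_or_prefix_of_prefix (List.prefix_append a d)
      (heq ▸ List.prefix_append a' d')).elim (hU a ha a' ha') fun h => (hU a' ha' a ha h).symm
    rw [List.append_cancel_left heq]
  rw [← Set.image_prod, tsum_image _ hinj, ← (Equiv.Set.prod U V).symm.tsum_eq,
    ENNReal.tsum_prod', ← ENNReal.tsum_mul_right]
  refine tsum_congr fun a => ?_
  rw [← ENNReal.tsum_mul_left]
  exact tsum_congr fun d => hh a a.2 d d.2

end Prefixes

lemma tsum_inter_add_tsum_sdiff {α : Type*} (D L : Set α) (f : α → ℝ≥0∞) :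
    ∑' c : D, f c = ∑' c : ↥(D ∩ L), f c + ∑' c : ↥(D \ L), f c := by
  conv_lhs => rw [← Set.inter_union_sdiff D L]
  exact Summable.tsum_union_disjoint Set.disjoint_sdiff_inter.symm ENNReal.summable
    ENNReal.summable

section Words

def wordPos (x : ℤ) (c : List ℕ) : ℤ := x + c.length - c.sum

/-- The walk reflected at `b` (that is, `X̃ = X - R`) after the claims `c`. -/
def wordReflPos (b x : ℤ) (c : List ℕ) : ℤ := c.foldl (fun y k => min (y + 1 - k) b) x

variable {a c d : List ℕ} {x y b : ℤ}

@[simp] lemma wordPos_nil : wordPos x [] = x := by simp [wordPos]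

lemma wordPos_append : wordPos x (a ++ d) = wordPos (wordPos x a) d := by
  simp only [wordPos, List.length_append, List.sum_append]; push_cast; ring

lemma wordPos_concat (k : ℕ) : wordPos x (c ++ [k]) = wordPos x c + 1 - k := by
  simp only [wordPos, List.length_append, List.sum_append, List.length_singleton,
    List.sum_singleton]
  push_cast; ring

@[simp] lemma wordReflPos_nil : wordReflPos b x [] = x := rfl

lemma wordReflPos_append : wordReflPos b x (a ++ d) = wordReflPos b (wordReflPos b x a) d := by
  simp [wordReflPos]

lemma wordReflPos_concat (k : ℕ) :
    wordReflPos b x (c ++ [k]) = min (wordReflPos b x c + 1 - k) b := by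
  simp [wordReflPos]

lemma wordReflPos_le_wordPos : wordReflPos b x c ≤ wordPos x c := by
  induction c using List.reverseRecOn with
  | nil => simp
  | append_singleton c k ih =>
    rw [wordReflPos_concat, wordPos_concat]
    exact (min_le_left _ _).trans (by omega)

lemma wordReflPos_eq_wordPos (h : ∀ a, a <+: c → wordPos x a ≤ b) :
    wordReflPos b x c = wordPos x c := by
  induction c using List.reverseRecOn with
  | nil => simp
  | append_singleton c k ih =>
    rw [wordReflPos_concat, ih fun a ha => h a (ha.trans (List.prefix_append c [k])),
      ← wordPos_concat]
    exact min_eq_left (h _ List.prefix_rfl)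

lemma wordPos_eq_of_mem_firstWords (hxy : x ≤ y) (hc : c ∈ firstWords fun c => y ≤ wordPos x c) :
    wordPos x c = y := by
  obtain rfl | ⟨c', k, rfl⟩ := List.eq_nil_or_concat c
  · exact le_antisymm (by simpa using hxy) hc.1
  · rw [List.concat_eq_append] at hc ⊢
    have hc' : ¬ y ≤ wordPos x c' := hc.2 c' (List.prefix_append c' [k]) (by simp)
    have hend : y ≤ wordPos x (c' ++ [k]) := hc.1
    rw [wordPos_concat] at hend ⊢
    omega

lemma wordReflPos_eq_wordPos_of_prefix (ha : a ∈ firstWords fun c => b + 1 ≤ wordPos x c)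
    {a' : List ℕ} (ha' : a' <+: a) (hlt : a'.length < a.length) :
    wordReflPos b x a' = wordPos x a' :=
  wordReflPos_eq_wordPos fun a'' ha'' => by
    have := ha.2 a'' (ha''.trans ha') (ha''.length_le.trans_lt hlt)
    omega

lemma wordReflPos_eq_of_mem_firstWords (hxb : x ≤ b)
    (hc : c ∈ firstWords fun c => b + 1 ≤ wordPos x c) : wordReflPos b x c = b := by
  have hpos := wordPos_eq_of_mem_firstWords (by omega) hc
  obtain rfl | ⟨c', k, rfl⟩ := List.eq_nil_or_concat c
  · rw [wordPos_nil] at hpos; omega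
  · rw [List.concat_eq_append] at hc hpos ⊢
    rw [wordReflPos_concat, wordReflPos_eq_wordPos_of_prefix hc (List.prefix_append c' [k])
      (by simp), ← wordPos_concat, hpos]
    omega

end Words

def ruinWords (x : ℤ) : Set (List ℕ) := firstWords fun c => wordPos x c ≤ -1

def reflRuinWords (b x : ℤ) : Set (List ℕ) := firstWords fun c => wordReflPos b x c ≤ -1

def hitWords (x y : ℤ) : Set (List ℕ) :=
  firstWords (fun c => y ≤ wordPos x c) ∩ {c | ∀ a, a <+: c → -1 < wordPos x a}

def belowWords (b x : ℤ) : Set (List ℕ) := {c | ∀ a, a <+: c → wordPos x a ≤ b}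

section Decompositions

variable {x y b T : ℤ}

lemma hitWords_eq_empty (hx : x < 0) : hitWords x y = ∅ :=
  Set.eq_empty_of_forall_notMem fun c hc => by
    have := hc.2 [] List.nil_prefix
    rw [wordPos_nil] at this
    omega

lemma hitWords_eq_image2 (hxy : x ≤ y) (hyT : y < T) :
    hitWords x T = Set.image2 (· ++ ·) (hitWords x y) (hitWords y T) := by
  ext c
  simp only [Set.mem_image2, hitWords, Set.mem_inter_iff, Set.mem_ofPred_eq]
  constructor
  · rintro ⟨hc, hsurv⟩
    obtain ⟨a, ha, d, rfl⟩ := exists_append_mem_firstWords (Q := fun c => y ≤ wordPos x c)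
      ⟨_, List.prefix_rfl, hyT.le.trans hc.1⟩
    have hpos := wordPos_eq_of_mem_firstWords hxy ha
    rw [append_mem_firstWords_iff] at hc
    rw [forall_prefix_append] at hsurv
    simp only [wordPos_append, hpos] at hc hsurv
    exact ⟨a, ⟨ha, hsurv.1⟩, d, ⟨hc.2, hsurv.2⟩, rfl⟩
  · rintro ⟨a, ⟨ha, hasurv⟩, d, ⟨hd, hdsurv⟩, rfl⟩
    have hpos := wordPos_eq_of_mem_firstWords hxy ha
    rw [append_mem_firstWords_iff, forall_prefix_append]
    simp only [wordPos_append, hpos]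
    exact ⟨⟨fun a' ha' hlt => by have := ha.2 a' ha' hlt; omega, hd⟩, hasurv, hdsurv⟩

lemma ruinWords_sdiff_belowWords (hb : 0 ≤ b) (hxb : x ≤ b) :
    ruinWords x \ belowWords b x =
      Set.image2 (· ++ ·) (hitWords x (b + 1)) (ruinWords (b + 1)) := by
  ext c
  simp only [Set.mem_image2, Set.mem_sdiff, hitWords, ruinWords, belowWords, Set.mem_inter_iff,
    Set.mem_ofPred_eq, not_forall, not_le, exists_prop]
  constructor
  · rintro ⟨hc, hexceed⟩
    obtain ⟨a, ha, d, rfl⟩ := exists_append_mem_firstWords (Q := fun c => b + 1 ≤ wordPos x c)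
      hexceed
    have hpos := wordPos_eq_of_mem_firstWords (by omega) ha
    rw [append_mem_firstWords_iff] at hc
    simp only [wordPos_append, hpos] at hc
    refine ⟨a, ⟨ha, fun a' ha' => ?_⟩, d, hc.2, rfl⟩
    rcases ha'.length_le.lt_or_eq with hlt | heq
    · exact not_le.1 (hc.1 a' ha' hlt)
    · rw [ha'.eq_of_length heq]; omega
  · rintro ⟨a, ⟨ha, hasurv⟩, d, hd, rfl⟩
    have hpos := wordPos_eq_of_mem_firstWords (by omega) ha
    rw [append_mem_firstWords_iff]
    simp only [wordPos_append, hpos]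
    exact ⟨⟨fun a' ha' _ => not_le.2 (hasurv a' ha'), hd⟩, a, List.prefix_append a d,
      by omega⟩

lemma reflRuinWords_sdiff_belowWords (hb : 0 ≤ b) (hxb : x ≤ b) :
    reflRuinWords b x \ belowWords b x =
      Set.image2 (· ++ ·) (hitWords x (b + 1)) (reflRuinWords b b) := by
  ext c
  simp only [Set.mem_image2, Set.mem_sdiff, hitWords, reflRuinWords, belowWords,
    Set.mem_inter_iff, Set.mem_ofPred_eq, not_forall, not_le, exists_prop]
  constructor
  · rintro ⟨hc, hexceed⟩
    obtain ⟨a, ha, d, rfl⟩ := exists_append_mem_firstWords (Q := fun c => b + 1 ≤ wordPos x c)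
      hexceed
    have hpos := wordPos_eq_of_mem_firstWords (by omega) ha
    rw [append_mem_firstWords_iff] at hc
    simp only [wordReflPos_append, wordReflPos_eq_of_mem_firstWords hxb ha] at hc
    refine ⟨a, ⟨ha, fun a' ha' => ?_⟩, d, hc.2, rfl⟩
    rcases ha'.length_le.lt_or_eq with hlt | heq
    · have := hc.1 a' ha' hlt
      rw [wordReflPos_eq_wordPos_of_prefix ha ha' hlt] at this
      omega
    · rw [ha'.eq_of_length heq]; omega
  · rintro ⟨a, ⟨ha, hasurv⟩, d, hd, rfl⟩
    have hpos := wordPos_eq_of_mem_firstWords (by omega) ha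
    rw [append_mem_firstWords_iff]
    simp only [wordReflPos_append, wordReflPos_eq_of_mem_firstWords hxb ha]
    refine ⟨⟨fun a' ha' hlt => ?_, hd⟩, a, List.prefix_append a d, by omega⟩
    rw [wordReflPos_eq_wordPos_of_prefix ha ha' hlt]
    exact not_le.2 (hasurv a' ha')

lemma reflRuinWords_inter_belowWords :
    reflRuinWords b x ∩ belowWords b x = ruinWords x ∩ belowWords b x := by
  refine Set.ext fun c => and_congr_left fun hc => ?_
  have h : ∀ a, a <+: c → wordReflPos b x a = wordPos x a :=
    fun a ha => wordReflPos_eq_wordPos fun a' ha' => hc a' (ha'.trans ha)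
  exact and_congr (by simp only [h c List.prefix_rfl])
    (forall₂_congr fun a ha => by simp only [h a ha])

end Decompositions

def wordWeight (p : ℕ → ℝ) (c : List ℕ) : ℝ≥0∞ := (c.map fun k => ENNReal.ofReal (p k)).prod

def hitTerm (p : ℕ → ℝ) (v : ℝ) (c : List ℕ) : ℝ≥0∞ :=
  ENNReal.ofReal (v ^ c.length) * wordWeight p c

def ruinTerm (p : ℕ → ℝ) (v w : ℝ) (x : ℤ) (c : List ℕ) : ℝ≥0∞ :=
  ENNReal.ofReal (v ^ c.length * w ^ (-wordPos x c)) * wordWeight p c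

def reflTerm (p : ℕ → ℝ) (v w z : ℝ) (b x : ℤ) (c : List ℕ) : ℝ≥0∞ :=
  ENNReal.ofReal (v ^ c.length * w ^ (-wordReflPos b x c) *
    z ^ (wordPos x c - wordReflPos b x c)) * wordWeight p c

section Sums

variable {p : ℕ → ℝ} {v w z : ℝ} {a d : List ℕ} {x y b T : ℤ}

lemma wordWeight_append : wordWeight p (a ++ d) = wordWeight p a * wordWeight p d := by
  simp [wordWeight]

lemma hitTerm_append (hv : 0 ≤ v) : hitTerm p v (a ++ d) = hitTerm p v a * hitTerm p v d := by
  simp only [hitTerm, wordWeight_append, List.length_append, pow_add,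
    ENNReal.ofReal_mul (pow_nonneg hv _)]
  ring

lemma ruinTerm_append (hv : 0 ≤ v) (ha : wordPos x a = y) :
    ruinTerm p v w x (a ++ d) = hitTerm p v a * ruinTerm p v w y d := by
  simp only [ruinTerm, hitTerm, wordWeight_append, List.length_append, pow_add, mul_assoc,
    wordPos_append, ha, ENNReal.ofReal_mul (pow_nonneg hv _)]
  ring

lemma reflTerm_append (hv : 0 ≤ v) (hz : 0 < z) (ha : wordPos x a = b + 1)
    (ha' : wordReflPos b x a = b) :
    reflTerm p v w z b x (a ++ d) =
      hitTerm p v a * (ENNReal.ofReal z * reflTerm p v w z b b d) := by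
  have hexp : wordPos x (a ++ d) - wordReflPos b x (a ++ d) =
      wordPos b d - wordReflPos b b d + 1 := by
    rw [wordPos_append, wordReflPos_append, ha, ha']
    simp only [wordPos]; ring
  rw [reflTerm, reflTerm, hitTerm, hexp, zpow_add_one₀ hz.ne', wordReflPos_append, ha',
    wordWeight_append, List.length_append, pow_add,
    show ∀ A B C D : ℝ, A * B * C * (D * z) = A * (z * (B * C * D)) by intros; ring,
    ENNReal.ofReal_mul (pow_nonneg hv _), ENNReal.ofReal_mul hz.le]
  ring

lemma tsum_hitTerm_split (hv : 0 ≤ v) (hxy : x ≤ y) (hyT : y < T) :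
    ∑' c : hitWords x T, hitTerm p v c =
      (∑' c : hitWords x y, hitTerm p v c) * ∑' c : hitWords y T, hitTerm p v c := by
  rw [hitWords_eq_image2 hxy hyT]
  exact tsum_image2_append (prefixFree_firstWords.mono Set.inter_subset_left)
    fun a _ d _ => hitTerm_append hv

lemma tsum_ruinTerm_split (hv : 0 ≤ v) (hb : 0 ≤ b) (hxb : x ≤ b) :
    ∑' c : ruinWords x, ruinTerm p v w x c =
      ∑' c : ↥(ruinWords x ∩ belowWords b x), ruinTerm p v w x c +
        (∑' c : hitWords x (b + 1), hitTerm p v c) *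
          ∑' c : ruinWords (b + 1), ruinTerm p v w (b + 1) c := by
  rw [tsum_inter_add_tsum_sdiff _ (belowWords b x), ruinWords_sdiff_belowWords hb hxb]
  exact congrArg _ <| tsum_image2_append (prefixFree_firstWords.mono Set.inter_subset_left)
    fun a ha _ _ => ruinTerm_append hv (wordPos_eq_of_mem_firstWords (by omega) ha.1)

lemma tsum_reflTerm_split (hv : 0 ≤ v) (hz : 0 < z) (hb : 0 ≤ b) (hxb : x ≤ b) :
    ∑' c : reflRuinWords b x, reflTerm p v w z b x c =
      ∑' c : ↥(ruinWords x ∩ belowWords b x), ruinTerm p v w x c +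
        (∑' c : hitWords x (b + 1), hitTerm p v c) *
          (ENNReal.ofReal z * ∑' c : reflRuinWords b b, reflTerm p v w z b b c) := by
  rw [tsum_inter_add_tsum_sdiff _ (belowWords b x), reflRuinWords_inter_belowWords,
    reflRuinWords_sdiff_belowWords hb hxb, ← ENNReal.tsum_mul_left]
  congr 1
  · refine tsum_congr fun c => ?_
    rw [reflTerm, ruinTerm, wordReflPos_eq_wordPos c.2.2, sub_self, zpow_zero, mul_one]
  · exact tsum_image2_append (prefixFree_firstWords.mono Set.inter_subset_left)
      fun a ha _ _ => reflTerm_append hv hz (wordPos_eq_of_mem_firstWords (by omega) ha.1)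
        (wordReflPos_eq_of_mem_firstWords hxb ha.1)

lemma tsum_hitTerm_pos (hv : 0 < v) (hp0 : 0 < p 0) (hx : 0 ≤ x) (hxy : x ≤ y) :
    0 < ∑' c : hitWords x y, hitTerm p v c := by
  set r := List.replicate (y - x).toNat 0
  have hpos : ∀ a, a <+: r → wordPos x a = x + a.length := fun a ha => by
    rw [(List.prefix_replicate_iff.1 ha).2]; simp [wordPos]
  have hmem : r ∈ hitWords x y :=
    ⟨⟨show y ≤ wordPos x r by rw [hpos r List.prefix_rfl, List.length_replicate]; omega,
      fun a ha hlt => show ¬ y ≤ wordPos x a by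
        rw [hpos a ha]; rw [List.length_replicate] at hlt; omega⟩,
      fun a ha => by rw [hpos a ha]; omega⟩
  refine lt_of_lt_of_le ?_ (ENNReal.le_tsum (⟨r, hmem⟩ : hitWords x y))
  simp only [r, hitTerm, wordWeight, List.length_replicate, List.map_replicate,
    List.prod_replicate]
  exact ENNReal.mul_pos (ENNReal.ofReal_pos.2 (pow_pos hv _)).ne'
    (ENNReal.pow_pos (ENNReal.ofReal_pos.2 hp0) _).ne'

end Sums

section Paths

variable {Ω : Type*} {C : ℕ → Ω → ℕ} {ω : Ω} {a c : List ℕ} {Q : List ℕ → Prop}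

def claims (C : ℕ → Ω → ℕ) (n : ℕ) (ω : Ω) : List ℕ := (List.range n).map (C · ω)

def cylinder (C : ℕ → Ω → ℕ) (c : List ℕ) : Set Ω := {ω | claims C c.length ω = c}

def hitTime (C : ℕ → Ω → ℕ) (Q : List ℕ → Prop) (ω : Ω) : ℕ∞ :=
  sInf ((fun n : ℕ => (n : ℕ∞)) '' {n | Q (claims C n ω)})

@[simp] lemma length_claims (n : ℕ) : (claims C n ω).length = n := by simp [claims]

lemma claims_succ (n : ℕ) : claims C (n + 1) ω = claims C n ω ++ [C n ω] := by
  simp [claims, List.range_succ]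

lemma take_claims {m n : ℕ} (h : m ≤ n) : (claims C n ω).take m = claims C m ω := by
  rw [claims, ← List.map_take, List.take_range, min_eq_left h, claims]

lemma mem_cylinder_iff : ω ∈ cylinder C c ↔ claims C c.length ω = c := Iff.rfl

lemma mem_cylinder_claims (n : ℕ) : ω ∈ cylinder C (claims C n ω) := by
  rw [mem_cylinder_iff, length_claims]

lemma claims_eq_take (hω : ω ∈ cylinder C c) {m : ℕ} (hm : m ≤ c.length) :
    claims C m ω = c.take m := by
  rw [← take_claims hm, hω]

lemma mem_cylinder_of_prefix (hω : ω ∈ cylinder C c) (ha : a <+: c) : ω ∈ cylinder C a := by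
  rw [mem_cylinder_iff, claims_eq_take hω ha.length_le, ← List.prefix_iff_eq_take.1 ha]

lemma cylinder_eq_biInter (c : List ℕ) :
    cylinder C c = ⋂ i ∈ Finset.range c.length, C i ⁻¹' {c.getD i 0} := by
  ext ω
  simp only [mem_cylinder_iff, Set.mem_iInter, Finset.mem_range, Set.mem_preimage,
    Set.mem_singleton_iff, List.ext_getElem_iff, length_claims, true_and]
  refine forall_congr' fun i => ⟨fun h hi => ?_, fun h hi _ => ?_⟩ <;> simp_all [claims]

lemma PrefixFree.pairwiseDisjoint_cylinder {D : Set (List ℕ)} (hD : PrefixFree D) :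
    D.PairwiseDisjoint (cylinder C) := by
  refine fun c hc c' hc' hne => Set.disjoint_left.2 fun ω hω hω' => hne ?_
  rcases le_total c.length c'.length with hl | hl
  · exact hD c hc c' hc' (List.prefix_iff_eq_take.2 (by rw [← claims_eq_take hω' hl, hω]))
  · exact (hD c' hc' c hc (List.prefix_iff_eq_take.2 (by rw [← claims_eq_take hω hl, hω']))).symm

lemma hitTime_le_length (hQ : Q c) (hω : ω ∈ cylinder C c) : hitTime C Q ω ≤ c.length :=
  sInf_le ⟨c.length, by rwa [Set.mem_ofPred_eq, hω], rfl⟩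

lemma hitTime_eq_length (hc : c ∈ firstWords Q) (hω : ω ∈ cylinder C c) :
    hitTime C Q ω = c.length := by
  refine le_antisymm (hitTime_le_length hc.1 hω) (le_sInf ?_)
  rintro _ ⟨n, hn, rfl⟩
  by_contra! hlt
  have hlt : n < c.length := by exact_mod_cast hlt
  rw [Set.mem_ofPred_eq, claims_eq_take hω hlt.le] at hn
  exact hc.2 _ (List.take_prefix n c) (by simpa using hlt) hn

lemma length_lt_hitTime (hω : ω ∈ cylinder C c) (hc : ∀ a, a <+: c → ¬ Q a) :
    (c.length : ℕ∞) < hitTime C Q ω := by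
  have h : ((c.length + 1 : ℕ) : ℕ∞) ≤ hitTime C Q ω := by
    refine le_sInf ?_
    rintro _ ⟨n, hn, rfl⟩
    by_contra! hlt
    have hle : n ≤ c.length := Nat.lt_succ_iff.1 (by exact_mod_cast hlt)
    rw [Set.mem_ofPred_eq, claims_eq_take hω hle] at hn
    exact hc _ (List.take_prefix n c) hn
  exact lt_of_lt_of_le (by exact_mod_cast c.length.lt_succ_self) h

lemma hitTime_lt_top_iff : hitTime C Q ω < ⊤ ↔ ∃ c ∈ firstWords Q, ω ∈ cylinder C c := by
  refine ⟨fun h => ?_, fun ⟨c, hc, hω⟩ => hitTime_eq_length hc hω ▸ ENat.natCast_lt_top _⟩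
  obtain ⟨n, hn⟩ : ∃ n, Q (claims C n ω) := by
    by_contra! hS
    simp [hitTime, hS] at h
  obtain ⟨a, ha, d, had⟩ := exists_append_mem_firstWords ⟨_, List.prefix_rfl, hn⟩
  exact ⟨a, ha, mem_cylinder_of_prefix (mem_cylinder_claims n) ⟨d, had⟩⟩

lemma setOf_hitTime_lt_top : {ω | hitTime C Q ω < ⊤} = ⋃ c ∈ firstWords Q, cylinder C c := by
  ext ω; simp [hitTime_lt_top_iff]

end Paths

section Bridge

variable {Ω : Type*} {C : ℕ → Ω → ℕ} {ω : Ω} {x y b : ℤ}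

lemma walk_eq_wordPos (n : ℕ) : walk C x n ω = wordPos x (claims C n ω) := by
  rw [walk, wordPos, length_claims, claims, Nat.cast_list_sum, List.map_map]
  rfl

lemma walk_sub_Rdiv (hxb : x ≤ b) (n : ℕ) :
    walk C x n ω - Rdiv C x b n ω = wordReflPos b x (claims C n ω) := by
  induction n with
  | zero => simp [Rdiv, walk, claims, hxb]
  | succ n ih =>
    have hsup := partialSups_succ (fun m => walk C x m ω - b) n
    rw [Order.succ_eq_add_one] at hsup
    simp only [Rdiv, ← partialSups_eq_sup'_range, hsup] at ih ⊢
    rw [claims_succ, wordReflPos_concat, ← ih, walk_eq_wordPos, walk_eq_wordPos, claims_succ,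
      wordPos_concat]
    omega

lemma tauMinus_eq_hitTime : tauMinus C x y ω = hitTime C (fun c => wordPos x c ≤ y) ω := by
  simp [tauMinus, hitTime, walk_eq_wordPos]

lemma tauPlus_eq_hitTime : tauPlus C x y ω = hitTime C (fun c => y ≤ wordPos x c) ω := by
  simp [tauPlus, hitTime, walk_eq_wordPos]

lemma Truin_eq_hitTime (hxb : x ≤ b) :
    Truin C x b ω = hitTime C (fun c => wordReflPos b x c ≤ -1) ω := by
  simp [Truin, hitTime, walk_sub_Rdiv hxb]

lemma setOf_tauPlus_lt_tauMinus :
    {ω | tauPlus C x y ω < tauMinus C x (-1) ω} = ⋃ c ∈ hitWords x y, cylinder C c := by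
  ext ω
  simp only [Set.mem_ofPred_eq, Set.mem_iUnion, exists_prop, tauPlus_eq_hitTime,
    tauMinus_eq_hitTime]
  constructor
  · intro h
    obtain ⟨c, hc, hω⟩ := hitTime_lt_top_iff.1 (h.trans_le le_top)
    rw [hitTime_eq_length hc hω] at h
    refine ⟨c, ⟨hc, fun a ha => not_le.1 fun hruin => ?_⟩, hω⟩
    have := hitTime_le_length (Q := fun c => wordPos x c ≤ -1) hruin (mem_cylinder_of_prefix hω ha)
    exact absurd (h.trans_le this) (not_lt.2 (by exact_mod_cast ha.length_le))
  · rintro ⟨c, ⟨hc, hsurv⟩, hω⟩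
    rw [hitTime_eq_length hc hω]
    exact length_lt_hitTime hω fun a ha => not_le.2 (hsurv a ha)

lemma walk_le_sub_of_two_le {n : ℕ} (h : ∀ i < n, 2 ≤ C i ω) : walk C x n ω ≤ x - n := by
  induction n with
  | zero => simp [walk]
  | succ n ih =>
    rw [walk_eq_wordPos, claims_succ, wordPos_concat, ← walk_eq_wordPos]
    have := ih fun i hi => h i (by omega)
    have := h n (by omega)
    push_cast
    omega

lemma exists_claim_lt_two_of_mem_cylinder {b : ℕ} {c : List ℕ} (hc : c ∈ hitWords b (b + 1))
    (hω : ω ∈ cylinder C c) : ∃ i < b + 1, C i ω < 2 := by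
  by_contra! hbig
  have hwalk := walk_le_sub_of_two_le (x := b) fun i (hi : i < min c.length (b + 1)) =>
    hbig i (hi.trans_le (min_le_right _ _))
  rw [walk_eq_wordPos, claims_eq_take hω (min_le_left _ _)] at hwalk
  rcases le_total c.length (b + 1) with hl | hl
  · rw [min_eq_left hl, List.take_length] at hwalk
    have := hc.1.1
    omega
  · rw [min_eq_right hl] at hwalk
    have := hc.2 _ (List.take_prefix (b + 1) c)
    push_cast at hwalk
    omega

end Bridge

structure IsClaimSeq {Ω : Type*} [MeasurableSpace Ω] (P : Measure Ω) (C : ℕ → Ω → ℕ)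
    (p : ℕ → ℝ) : Prop where
  measurable : ∀ i, Measurable (C i)
  iIndepFun : ProbabilityTheory.iIndepFun C P
  law : ∀ i k, P {ω | C i ω = k} = ENNReal.ofReal (p k)

section Expectations

variable {Ω : Type*} [MeasurableSpace Ω] {P : Measure Ω} {C : ℕ → Ω → ℕ} {p : ℕ → ℝ}
  {D : Set (List ℕ)}

lemma measurableSet_cylinder (hC : ∀ i, Measurable (C i)) (c : List ℕ) :
    MeasurableSet (cylinder C c) := by
  rw [cylinder_eq_biInter]
  exact .biInter (Finset.range _).countable_toSet fun i _ => hC i (measurableSet_singleton _)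

lemma IsClaimSeq.measure_cylinder (hCp : IsClaimSeq P C p) (c : List ℕ) :
    P (cylinder C c) = wordWeight p c := by
  rw [cylinder_eq_biInter, hCp.iIndepFun.measure_inter_preimage_eq_mul _
    fun i _ => measurableSet_singleton _, wordWeight, ← List.ofFn_getElem_eq_map,
    List.prod_ofFn, Finset.prod_range]
  refine Finset.prod_congr rfl fun i _ => ?_
  rw [List.getD_eq_getElem _ _ i.2]
  exact hCp.law i _

lemma IsClaimSeq.tsum_wordWeight (hCp : IsClaimSeq P C p) (hD : PrefixFree D) :
    ∑' c : D, wordWeight p c = P (⋃ c ∈ D, cylinder C c) := by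
  rw [measure_biUnion D.to_countable hD.pairwiseDisjoint_cylinder
    fun c _ => measurableSet_cylinder hCp.measurable c]
  exact tsum_congr fun c => (hCp.measure_cylinder c).symm

lemma IsClaimSeq.tsum_ofReal_mul_wordWeight_ne_top [IsProbabilityMeasure P]
    (hCp : IsClaimSeq P C p) (hD : PrefixFree D) {val : List ℕ → ℝ} (hval : ∀ c ∈ D, val c ≤ 1) :
    ∑' c : D, ENNReal.ofReal (val c) * wordWeight p c ≠ ⊤ :=
  ne_top_of_le_ne_top ENNReal.one_ne_top <|
    calc ∑' c : D, ENNReal.ofReal (val c) * wordWeight p c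
        ≤ ∑' c : D, wordWeight p c := ENNReal.tsum_le_tsum fun c =>
          mul_le_of_le_one_left' (ENNReal.ofReal_le_one.2 (hval c c.2))
      _ ≤ 1 := hCp.tsum_wordWeight hD ▸ prob_le_one

lemma IsClaimSeq.eind_eq_tsum (hCp : IsClaimSeq P C p) (hD : PrefixFree D) {A : Set Ω}
    (hA : A = ⋃ c ∈ D, cylinder C c) {F : Ω → ℝ} {val : List ℕ → ℝ} (hval : ∀ c ∈ D, 0 ≤ val c)
    (hF : ∀ c ∈ D, ∀ ω ∈ cylinder C c, F ω = val c) :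
    Eind P A F = (∑' c : D, ENNReal.ofReal (val c) * wordWeight p c).toReal := by
  have hmemA : ∀ ω ∈ A, ∃ c ∈ D, ω ∈ cylinder C c := by simp [hA]
  have hmeas : ∀ c : D, Measurable ((cylinder C c).indicator fun _ => ENNReal.ofReal (val c)) :=
    fun c => measurable_const.indicator (measurableSet_cylinder hCp.measurable c)
  have hg : ∀ ω, ∑' c : D, (cylinder C c).indicator (fun _ => ENNReal.ofReal (val c)) ω =
      ENNReal.ofReal (A.indicator F ω) := by
    intro ω
    by_cases hω : ω ∈ A
    · obtain ⟨c, hc, hωc⟩ := hmemA ω hω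
      rw [Set.indicator_of_mem hω, hF c hc ω hωc, tsum_eq_single ⟨c, hc⟩ fun c' hne =>
        Set.indicator_of_notMem (fun hωc' => Set.disjoint_left.1
          (hD.pairwiseDisjoint_cylinder c'.2 hc fun h => hne (Subtype.ext h)) hωc' hωc) _]
      exact Set.indicator_of_mem hωc _
    · rw [Set.indicator_of_notMem hω, ENNReal.ofReal_zero]
      exact ENNReal.tsum_eq_zero.2 fun c => Set.indicator_of_notMem
        (fun hωc => hω (hA ▸ Set.mem_biUnion c.2 hωc)) _
  have hnonneg : ∀ ω, 0 ≤ A.indicator F ω := Set.indicator_nonneg fun ω hω => by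
    obtain ⟨c, hc, hωc⟩ := hmemA ω hω
    exact hF c hc ω hωc ▸ hval c hc
  -- in `ℝ≥0∞` the integral commutes with the countable sum, with no integrability conditions
  calc Eind P A F
      = ∫ ω, (∑' c : D, (cylinder C c).indicator
          (fun _ => ENNReal.ofReal (val c)) ω).toReal ∂P := by
        simp only [Eind, hg, ENNReal.toReal_ofReal (hnonneg _)]
    _ = (∫⁻ ω, ∑' c : D, (cylinder C c).indicator (fun _ => ENNReal.ofReal (val c)) ω ∂P).toReal :=
        integral_toReal (Measurable.tsum hmeas).aemeasurable
          (.of_forall fun ω => hg ω ▸ ENNReal.ofReal_lt_top)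
    _ = _ := by
        rw [lintegral_tsum fun c => (hmeas c).aemeasurable]
        simp only [lintegral_indicator_const (measurableSet_cylinder hCp.measurable _),
          hCp.measure_cylinder]

end Expectations

section Transforms

variable {Ω : Type*} [MeasurableSpace Ω] {P : Measure Ω} {C : ℕ → Ω → ℕ} {p : ℕ → ℝ}
  {v w z : ℝ} {x y b : ℤ}

lemma IsClaimSeq.Psi_eq_tsum (hCp : IsClaimSeq P C p) (hv : 0 ≤ v) (hw : 0 ≤ w) (x : ℤ) :
    Psi P C v w x = (∑' c : ruinWords x, ruinTerm p v w x c).toReal :=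
  hCp.eind_eq_tsum prefixFree_firstWords
    (by simp_rw [tauMinus_eq_hitTime]; exact setOf_hitTime_lt_top)
    (val := fun c => v ^ c.length * w ^ (-wordPos x c)) (fun c _ => by positivity)
    fun c hc ω hω => by
      simp only [tauMinus_eq_hitTime, hitTime_eq_length hc hω, ENat.toNat_natCast,
        walk_eq_wordPos, mem_cylinder_iff.1 hω]

lemma IsClaimSeq.W_eq_tsum (hCp : IsClaimSeq P C p) (hv : 0 ≤ v) (hy : 0 ≤ y) (p₀ : ℝ) :
    W P C v p₀ y = 1 / (p₀ * (∑' c : hitWords 0 y, hitTerm p v c).toReal) := by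
  rw [W, if_pos hy, hCp.eind_eq_tsum (prefixFree_firstWords.mono Set.inter_subset_left)
    setOf_tauPlus_lt_tauMinus (val := fun c => v ^ c.length) (fun c _ => by positivity)
    fun c hc ω hω => by rw [tauPlus_eq_hitTime, hitTime_eq_length hc.1 hω, ENat.toNat_natCast]]
  rfl

lemma IsClaimSeq.dividends_eq_tsum (hCp : IsClaimSeq P C p) (hv : 0 ≤ v) (hw : 0 ≤ w)
    (hz : 0 ≤ z) (hxb : x ≤ b) :
    Eind P {ω | Truin C x b ω < ⊤}
        (fun ω => v ^ (Truin C x b ω).toNat *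
          w ^ (-(walk C x (Truin C x b ω).toNat ω - Rdiv C x b (Truin C x b ω).toNat ω)) *
          z ^ Rdiv C x b (Truin C x b ω).toNat ω) =
      (∑' c : reflRuinWords b x, reflTerm p v w z b x c).toReal :=
  hCp.eind_eq_tsum prefixFree_firstWords
    (by simp_rw [Truin_eq_hitTime hxb]; exact setOf_hitTime_lt_top)
    (val := fun c => v ^ c.length * w ^ (-wordReflPos b x c) *
      z ^ (wordPos x c - wordReflPos b x c)) (fun c _ => by positivity)
    fun c hc ω hω => by
      have hR : Rdiv C x b c.length ω = wordPos x c - wordReflPos b x c := by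
        have := walk_sub_Rdiv (C := C) (ω := ω) hxb c.length
        rw [walk_eq_wordPos, mem_cylinder_iff.1 hω] at this
        omega
      rw [Truin_eq_hitTime hxb, hitTime_eq_length hc hω, ENat.toNat_natCast, walk_sub_Rdiv hxb,
        hR, mem_cylinder_iff.1 hω]

variable [IsProbabilityMeasure P]

lemma IsClaimSeq.tsum_hitTerm_ne_top (hCp : IsClaimSeq P C p) (hv : v ∈ Set.Ioc 0 1)
    (x y : ℤ) : ∑' c : hitWords x y, hitTerm p v c ≠ ⊤ :=
  hCp.tsum_ofReal_mul_wordWeight_ne_top (prefixFree_firstWords.mono Set.inter_subset_left)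
    (val := fun c => v ^ c.length) fun _ _ => pow_le_one₀ hv.1.le hv.2

lemma IsClaimSeq.tsum_ruinTerm_ne_top (hCp : IsClaimSeq P C p) (hv : v ∈ Set.Ioc 0 1)
    (hw : w ∈ Set.Ioc 0 1) {D : Set (List ℕ)} (hD : D ⊆ ruinWords x) :
    ∑' c : D, ruinTerm p v w x c ≠ ⊤ :=
  hCp.tsum_ofReal_mul_wordWeight_ne_top (prefixFree_firstWords.mono hD)
    (val := fun c => v ^ c.length * w ^ (-wordPos x c)) fun c hc =>
    mul_le_one₀ (pow_le_one₀ hv.1.le hv.2) (zpow_nonneg hw.1.le _)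
      (zpow_le_one₀ hw.1 hw.2 (by have := (hD hc).1; omega))

lemma IsClaimSeq.tsum_reflTerm_ne_top (hCp : IsClaimSeq P C p) (hv : v ∈ Set.Ioc 0 1)
    (hw : w ∈ Set.Ioc 0 1) (hz : z ∈ Set.Ioc 0 1) :
    ∑' c : reflRuinWords b x, reflTerm p v w z b x c ≠ ⊤ :=
  hCp.tsum_ofReal_mul_wordWeight_ne_top prefixFree_firstWords
    (val := fun c => v ^ c.length * w ^ (-wordReflPos b x c) *
      z ^ (wordPos x c - wordReflPos b x c)) fun c hc =>
    mul_le_one₀ (mul_le_one₀ (pow_le_one₀ hv.1.le hv.2) (zpow_nonneg hw.1.le _)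
      (zpow_le_one₀ hw.1 hw.2 (by have := hc.1; omega))) (zpow_nonneg hz.1.le _)
      (zpow_le_one₀ hz.1 hz.2 (sub_nonneg.2 wordReflPos_le_wordPos))

lemma IsClaimSeq.toReal_tsum_hitTerm_pos (hCp : IsClaimSeq P C p) (hv : v ∈ Set.Ioc 0 1)
    (hp0 : 0 < p 0) (hx : 0 ≤ x) (hxy : x ≤ y) :
    0 < (∑' c : hitWords x y, hitTerm p v c).toReal :=
  ENNReal.toReal_pos (tsum_hitTerm_pos hv.1 hp0 hx hxy).ne' (hCp.tsum_hitTerm_ne_top hv x y)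

end Transforms

section BarrierBound

variable {Ω : Type*} [MeasurableSpace Ω] {P : Measure Ω} [IsProbabilityMeasure P]
  {C : ℕ → Ω → ℕ} {p : ℕ → ℝ} {v : ℝ}

lemma IsClaimSeq.measure_two_le_pos (hCp : IsClaimSeq P C p) (hnn : ∀ k, 0 ≤ p k)
    (hp : p 0 + p 1 < 1) (i : ℕ) : 0 < P (C i ⁻¹' {k | 2 ≤ k}) := by
  have hset : {k : ℕ | 2 ≤ k} = ({0} ∪ {1})ᶜ := by
    ext k
    simp only [Set.mem_ofPred_eq, Set.mem_compl_iff, Set.mem_union, Set.mem_singleton_iff]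
    omega
  have hsmall : P (C i ⁻¹' ({0} ∪ {1})) ≤ ENNReal.ofReal (p 0 + p 1) := by
    rw [Set.preimage_union, ENNReal.ofReal_add (hnn 0) (hnn 1), ← hCp.law i 0, ← hCp.law i 1]
    exact measure_union_le _ _
  rw [hset, Set.preimage_compl, prob_compl_eq_one_sub
    (hCp.measurable i (measurableSet_singleton 0 |>.union (measurableSet_singleton 1)))]
  exact tsub_pos_of_lt (hsmall.trans_lt (ENNReal.ofReal_lt_one.2 hp))

/-- With positive probability the first `b + 1` claims are all at least `2`, and then the walk
started at `b` is ruined before it can reach `b + 1`. -/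
lemma IsClaimSeq.tsum_wordWeight_hitWords_lt_one (hCp : IsClaimSeq P C p) (hnn : ∀ k, 0 ≤ p k)
    (hp : p 0 + p 1 < 1) (b : ℕ) : ∑' c : hitWords b (b + 1), wordWeight p c < 1 := by
  set E := ⋂ i ∈ Finset.range (b + 1), C i ⁻¹' {k | 2 ≤ k}
  have hE : MeasurableSet E := .biInter (Finset.range _).countable_toSet
    fun i _ => hCp.measurable i (Set.to_countable _).measurableSet
  have hPE : P E ≠ 0 := by
    rw [hCp.iIndepFun.measure_inter_preimage_eq_mul _
      fun i _ => (Set.to_countable {k : ℕ | 2 ≤ k}).measurableSet]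
    exact Finset.prod_ne_zero_iff.2 fun i _ => (hCp.measure_two_le_pos hnn hp i).ne'
  have hsub : ⋃ c ∈ hitWords b (b + 1), cylinder C c ⊆ Eᶜ := by
    simp only [Set.subset_def, Set.mem_iUnion, Set.mem_compl_iff, E, Set.mem_iInter,
      Finset.mem_range, Set.mem_preimage, Set.mem_ofPred_eq, not_forall, not_le, exists_prop]
    rintro ω ⟨c, hc, hω⟩
    exact exists_claim_lt_two_of_mem_cylinder hc hω
  calc ∑' c : hitWords b (b + 1), wordWeight p c
      = P (⋃ c ∈ hitWords b (b + 1), cylinder C c) :=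
        hCp.tsum_wordWeight (prefixFree_firstWords.mono Set.inter_subset_left)
    _ ≤ P Eᶜ := measure_mono hsub
    _ < 1 := by
        rw [prob_compl_eq_one_sub hE]
        exact ENNReal.sub_lt_self ENNReal.one_ne_top one_ne_zero hPE

lemma IsClaimSeq.tsum_hitTerm_succ_lt_one (hCp : IsClaimSeq P C p) (hnn : ∀ k, 0 ≤ p k)
    (hv : v ∈ Set.Ioc 0 1) (hdeg : min (p 0 + p 1) v < 1) (b : ℕ) :
    ∑' c : hitWords b (b + 1), hitTerm p v c < 1 := by
  have hle : ∑' c : hitWords b (b + 1), hitTerm p v c ≤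
      ENNReal.ofReal v * ∑' c : hitWords b (b + 1), wordWeight p c := by
    rw [← ENNReal.tsum_mul_left]
    refine ENNReal.tsum_le_tsum fun c => mul_le_mul_left (ENNReal.ofReal_le_ofReal ?_) _
    have hne : (c : List ℕ) ≠ [] := fun h => by
      have := c.2.1.1
      simp [h] at this
    exact pow_le_of_le_one hv.1.le hv.2 (List.length_pos_iff.2 hne).ne'
  rcases min_lt_iff.1 hdeg with hp | hv1
  · calc _ ≤ ENNReal.ofReal v * ∑' c : hitWords b (b + 1), wordWeight p c := hle
      _ ≤ ∑' c : hitWords b (b + 1), wordWeight p c :=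
        mul_le_of_le_one_left' (ENNReal.ofReal_le_one.2 hv.2)
      _ < 1 := hCp.tsum_wordWeight_hitWords_lt_one hnn hp b
  · have hwt : ∑' c : hitWords b (b + 1), wordWeight p c ≤ 1 :=
      hCp.tsum_wordWeight (prefixFree_firstWords.mono Set.inter_subset_left) ▸ prob_le_one
    calc _ ≤ ENNReal.ofReal v * 1 := hle.trans (mul_le_mul_right hwt _)
      _ < 1 := by rw [mul_one]; exact ENNReal.ofReal_lt_one.2 hv1

end BarrierBound

/-- `E_x[v^{τ_{b+1}^+}; τ_{b+1}^+ < τ_{-1}^-]`. -/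
def upTransform (p : ℕ → ℝ) (v : ℝ) (b x : ℤ) : ℝ :=
  (∑' c : hitWords x (b + 1), hitTerm p v c).toReal

/-- `E_x[v^{τ_{-1}^-} w^{-X(τ_{-1}^-)}; τ_{-1}^- < τ_{b+1}^+]`. -/
def ruinBelowTransform (p : ℕ → ℝ) (v w : ℝ) (b x : ℤ) : ℝ :=
  (∑' c : ↥(ruinWords x ∩ belowWords b x), ruinTerm p v w x c).toReal

/-- `E_x[v^T w^{-X̃_T} z^{R(T)}; T < ∞]` for the walk reflected at `b`. -/
def reflRuinTransform (p : ℕ → ℝ) (v w z : ℝ) (b x : ℤ) : ℝ :=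
  (∑' c : reflRuinWords b x, reflTerm p v w z b x c).toReal

section Identities

variable {Ω : Type*} [MeasurableSpace Ω] {P : Measure Ω} [IsProbabilityMeasure P]
  {C : ℕ → Ω → ℕ} {p : ℕ → ℝ} {v w z : ℝ} {y b : ℤ}

lemma IsClaimSeq.W_pos (hCp : IsClaimSeq P C p) (hv : v ∈ Set.Ioc 0 1) (hp0 : 0 < p 0)
    (hy : 0 ≤ y) : 0 < W P C v (p 0) y := by
  rw [hCp.W_eq_tsum hv.1.le hy]
  exact one_div_pos.2 (mul_pos hp0 (hCp.toReal_tsum_hitTerm_pos hv hp0 le_rfl hy))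

lemma IsClaimSeq.W_eq_mul (hCp : IsClaimSeq P C p) (hv : v ∈ Set.Ioc 0 1) (hp0 : 0 < p 0)
    (hyb : y ≤ b) : W P C v (p 0) y = upTransform p v b y * W P C v (p 0) (b + 1) := by
  rcases lt_or_ge y 0 with hy | hy
  · simp [W, upTransform, hy, hitWords_eq_empty hy]
  have hB := hCp.toReal_tsum_hitTerm_pos hv hp0 hy (by omega : y ≤ b + 1)
  have hH := hCp.toReal_tsum_hitTerm_pos hv hp0 le_rfl hy
  rw [hCp.W_eq_tsum hv.1.le hy, hCp.W_eq_tsum hv.1.le (by omega),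
    tsum_hitTerm_split hv.1.le hy (by omega : y < b + 1), ENNReal.toReal_mul, upTransform]
  field_simp

lemma IsClaimSeq.Psi_eq_add_mul (hCp : IsClaimSeq P C p) (hv : v ∈ Set.Ioc 0 1)
    (hw : w ∈ Set.Ioc 0 1) (hb : 0 ≤ b) (hyb : y ≤ b) :
    Psi P C v w y = ruinBelowTransform p v w b y + upTransform p v b y * Psi P C v w (b + 1) := by
  rw [hCp.Psi_eq_tsum hv.1.le hw.1.le, hCp.Psi_eq_tsum hv.1.le hw.1.le,
    tsum_ruinTerm_split hv.1.le hb hyb,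
    ENNReal.toReal_add (hCp.tsum_ruinTerm_ne_top hv hw Set.inter_subset_left)
      (ENNReal.mul_ne_top (hCp.tsum_hitTerm_ne_top hv y _) (hCp.tsum_ruinTerm_ne_top hv hw le_rfl)),
    ENNReal.toReal_mul]
  rfl

lemma IsClaimSeq.Z_eq_add_mul (hCp : IsClaimSeq P C p) (hv : v ∈ Set.Ioc 0 1)
    (hw : w ∈ Set.Ioc 0 1) (hp0 : 0 < p 0) (hb : 0 ≤ b) (hyb : y ≤ b) :
    Z P C v w (p 0) y =
      ruinBelowTransform p v w b y + upTransform p v b y * Z P C v w (p 0) (b + 1) := by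
  rw [Z, Z, hCp.Psi_eq_add_mul hv hw hb hyb, hCp.W_eq_mul hv hp0 hyb]
  ring

lemma IsClaimSeq.reflRuinTransform_eq_add_mul (hCp : IsClaimSeq P C p) (hv : v ∈ Set.Ioc 0 1)
    (hw : w ∈ Set.Ioc 0 1) (hz : z ∈ Set.Ioc 0 1) (hb : 0 ≤ b) (hyb : y ≤ b) :
    reflRuinTransform p v w z b y =
      ruinBelowTransform p v w b y + upTransform p v b y * (z * reflRuinTransform p v w z b b) := by
  rw [reflRuinTransform, tsum_reflTerm_split hv.1.le hz.1 hb hyb,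
    ENNReal.toReal_add (hCp.tsum_ruinTerm_ne_top hv hw Set.inter_subset_left)
      (ENNReal.mul_ne_top (hCp.tsum_hitTerm_ne_top hv y _)
        (ENNReal.mul_ne_top ENNReal.ofReal_ne_top (hCp.tsum_reflTerm_ne_top hv hw hz))),
    ENNReal.toReal_mul, ENNReal.toReal_mul, ENNReal.toReal_ofReal hz.1.le]
  rfl

end Identities

lemma barrier_solution {A B G Z W : ℤ → ℝ} {z : ℝ} {b x : ℤ}
    (hZ : ∀ y ≤ b, Z y = A y + B y * Z (b + 1)) (hW : ∀ y ≤ b, W y = B y * W (b + 1))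
    (hG : ∀ y ≤ b, G y = A y + B y * (z * G b)) (hW₁ : W (b + 1) ≠ 0) (hzB : z * B b ≠ 1)
    (hx : x ≤ b) : G x = Z x - (Z (b + 1) - z * Z b) / (W (b + 1) - z * W b) * W x := by
  have hden : 1 - z * B b ≠ 0 := sub_ne_zero.2 hzB.symm
  have hGb : G b = A b / (1 - z * B b) := by
    rw [eq_div_iff hden]
    linear_combination hG b le_rfl
  rw [hG x hx, hZ x hx, hZ b le_rfl, hW x hx, hW b le_rfl, hGb,
    show W (b + 1) - z * (B b * W (b + 1)) = W (b + 1) * (1 - z * B b) by ring]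
  field_simp
  ring

variable {Ω : Type*} [MeasurableSpace Ω]

theorem dividends_deficit_joint_transform_general
    (P : Measure Ω) [IsProbabilityMeasure P]
    (C : ℕ → Ω → ℕ) (p : ℕ → ℝ)
    (hC : ∀ i, Measurable (C i))
    (hindep : ProbabilityTheory.iIndepFun C P)
    (hdist : ∀ i k, P {ω | C i ω = k} = ENNReal.ofReal (p k))
    (hnn : ∀ k, 0 ≤ p k) (hp0 : 0 < p 0)
    (v : ℝ) (hv : v ∈ Set.Ioc (0 : ℝ) 1) (z : ℝ) (hz : z ∈ Set.Ioc (0 : ℝ) 1)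
    (w : ℝ) (hw : w ∈ Set.Ioc (0 : ℝ) 1) (hdeg : min (p 0 + p 1) v < 1)
    (b : ℕ) (x : ℤ) (hx : x ≤ (b : ℤ)) :
    Eind P {ω | Truin C x b ω < ⊤}
        (fun ω => v ^ (Truin C x b ω).toNat *
          w ^ (-(walk C x (Truin C x b ω).toNat ω - Rdiv C x b (Truin C x b ω).toNat ω)) *
          z ^ Rdiv C x b (Truin C x b ω).toNat ω)
      = Z P C v w (p 0) x -
          (Z P C v w (p 0) ((b : ℤ) + 1) - z * Z P C v w (p 0) b) /
            (W P C v (p 0) ((b : ℤ) + 1) - z * W P C v (p 0) b) * W P C v (p 0) x := by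
  have hCp : IsClaimSeq P C p := ⟨hC, hindep, hdist⟩
  have hb : (0 : ℤ) ≤ b := b.cast_nonneg
  have hzB : z * upTransform p v b b < 1 :=
    mul_lt_one_of_nonneg_of_lt_one_right hz.2 ENNReal.toReal_nonneg
      (ENNReal.toReal_lt_of_lt_ofReal (by simpa using hCp.tsum_hitTerm_succ_lt_one hnn hv hdeg b))
  rw [hCp.dividends_eq_tsum hv.1.le hw.1.le hz.1.le hx]
  exact barrier_solution (Z := Z P C v w (p 0)) (W := W P C v (p 0))
    (fun y hy => hCp.Z_eq_add_mul hv hw hp0 hb hy) (fun y hy => hCp.W_eq_mul hv hp0 hy)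
    (fun y hy => hCp.reflRuinTransform_eq_add_mul hv hw hz hb hy)
    (hCp.W_pos hv hp0 (by omega)).ne' hzB.ne hx

/-- Joint transform of ruin time, deficit at ruin and cumulative dividends of the walk
reflected at the barrier `b`. -/
theorem dividends_deficit_joint_transform
    (P : Measure Ω) [IsProbabilityMeasure P]
    (C : ℕ → Ω → ℕ) (p : ℕ → ℝ)
    (hC : ∀ i, Measurable (C i))
    (hindep : ProbabilityTheory.iIndepFun C P)
    (hdist : ∀ i k, P {ω | C i ω = k} = ENNReal.ofReal (p k))
    (hnn : ∀ k, 0 ≤ p k) (hsum : ∑' k, p k = 1) (hp0 : 0 < p 0)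
    (v : ℝ) (hv : v ∈ Set.Ioc (0 : ℝ) 1) (z : ℝ) (hz : z ∈ Set.Ioc (0 : ℝ) 1)
    (w : ℝ) (hw : w ∈ Set.Ioc (0 : ℝ) 1) (hdeg : min (p 0 + p 1) v < 1)
    (b : ℕ) (x : ℤ) (hx : x ≤ (b : ℤ)) :
    Eind P {ω | Truin C x b ω < ⊤}
        (fun ω => v ^ (Truin C x b ω).toNat *
          w ^ (-(walk C x (Truin C x b ω).toNat ω - Rdiv C x b (Truin C x b ω).toNat ω)) *
          z ^ Rdiv C x b (Truin C x b ω).toNat ω)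
      = Z P C v w (p 0) x -
          (Z P C v w (p 0) ((b : ℤ) + 1) - z * Z P C v w (p 0) b) /
            (W P C v (p 0) ((b : ℤ) + 1) - z * W P C v (p 0) b) * W P C v (p 0) x :=
  dividends_deficit_joint_transform_general P C p hC hindep hdist hnn hp0 v hv z hz w hw hdeg b x hx

end RW
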